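/- Fix N, S ≥ 1 and L ≥ 1. Let Â ∈ ℝ^{N×N} have nonnegative entries, let W^{(0)}, …, W^{(L−1)} be real weight matrices of compatible sizes with W^{(0)} having S rows, and suppose ‖W^{(l)}‖_F² ≤ W for every l, where W ≥ 0. Let g : ℝ^{d} → ℝ^{T} (with d the number of columns of W^{(L−1)}) satisfy ‖g(u) − g(v)‖₂² ≤ M ‖u − v‖₂² for all u, v and some constant M ≥ 0. Define the L-layer GCN f by: H^{(0)} = X ∈ ℝ^{N×S}, H^{(l+1)} = ReLU(Â H^{(l)} W^{(l)}) entrywise for 0 ≤ l ≤ L−2, and f(X)_{i·} = g((Â H^{(L−1)} W^{(L−1)})_{i·}) for each node i. Then for every perturbation U ∈ ℝ^{N×S} and every node i, the attack influence φ_i(U) = ‖f(X+U)_{i·} − f(X)_{i·}‖₂² satisfies φ_i(U) ≤ M · W^L · ‖(Â^L |U|)_{i·}‖₂², where |U| is the entrywise absolute value of U and (Â^L |U|)_{i·} is the i-th row of the matrix product Â^L · |U|. -/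

import Mathlib

open scoped BigOperators

/-- The ReLU function `x ↦ max x 0`. -/
def relu (x : ℝ) : ℝ := max x 0

/-!
Since ReLU is 1-Lipschitz and `Â` is entrywise nonnegative, the triangle inequality shows by
induction on the layer that the two forward passes stay entrywise close:
`|H'⁽ˡ⁾ - H⁽ˡ⁾| ≤ Â^l |U| |W⁽⁰⁾| ⋯ |W⁽ˡ⁻¹⁾|`. Cauchy–Schwarz on row `i` of the last
pre-activation, together with submultiplicativity of the squared Frobenius norm applied to the
product of the `|W⁽ˡ⁾|`, then turns this into the bound `M Wᴸ ‖(Âᴸ |U|)ᵢ‖²`.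
-/

lemma abs_relu_sub_relu_le (a b : ℝ) : |relu a - relu b| ≤ |a - b| :=
  abs_max_sub_max_le_abs a b 0

namespace Matrix

variable {l m n : Type*} [Fintype m]

lemma abs_mul_apply_le {A A' : Matrix l m ℝ} {B B' : Matrix m n ℝ}
    (hA : ∀ i j, |A i j| ≤ A' i j) (hB : ∀ j k, |B j k| ≤ B' j k) (i : l) (k : n) :
    |(A * B) i k| ≤ (A' * B') i k :=
  calc |(A * B) i k| ≤ ∑ j, |A i j| * |B j k| := by
        simpa only [mul_apply, abs_mul] using
          Finset.abs_sum_le_sum_abs (fun j => A i j * B j k) Finset.univ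
    _ ≤ (A' * B') i k :=
        Finset.sum_le_sum fun j _ =>
          mul_le_mul (hA i j) (hB j k) (abs_nonneg _) ((abs_nonneg _).trans (hA i j))

variable [Fintype n]

lemma sum_sq_mul_apply_le (A : Matrix l m ℝ) (B : Matrix m n ℝ) (i : l) :
    ∑ k, (A * B) i k ^ 2 ≤ (∑ j, A i j ^ 2) * ∑ j, ∑ k, B j k ^ 2 :=
  calc ∑ k, (A * B) i k ^ 2 ≤ ∑ k, (∑ j, A i j ^ 2) * ∑ j, B j k ^ 2 :=
        Finset.sum_le_sum fun k _ => by
          simpa only [mul_apply] using Finset.sum_mul_sq_le_sq_mul_sq _ _ _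
    _ = (∑ j, A i j ^ 2) * ∑ j, ∑ k, B j k ^ 2 := by
        rw [← Finset.mul_sum, Finset.sum_comm]

lemma sum_sq_mul_le [Fintype l] (A : Matrix l m ℝ) (B : Matrix m n ℝ) :
    ∑ i, ∑ k, (A * B) i k ^ 2 ≤ (∑ i, ∑ j, A i j ^ 2) * ∑ j, ∑ k, B j k ^ 2 := by
  rw [Finset.sum_mul]
  exact Finset.sum_le_sum fun i _ => sum_sq_mul_apply_le A B i

end Matrix

lemma sum_sq_le_sum_sq_of_abs_le {ι : Type*} [Fintype ι] {x y : ι → ℝ}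
    (h : ∀ k, |x k| ≤ y k) : ∑ k, x k ^ 2 ≤ ∑ k, y k ^ 2 :=
  Finset.sum_le_sum fun k _ => sq_le_sq.2 ((h k).trans (le_abs_self _))

section GCN

variable {N : ℕ} {dims : ℕ → ℕ}
  (W : (l : ℕ) → Matrix (Fin (dims l)) (Fin (dims (l + 1))) ℝ)

noncomputable def absPrefixProd : (l : ℕ) → Matrix (Fin (dims 0)) (Fin (dims l)) ℝ
  | 0 => 1
  | l + 1 => absPrefixProd l * (W l).map (fun x => |x|)

lemma sum_sq_absPrefixProd_le {L : ℕ} {Wc : ℝ}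
    (hW : ∀ l, l < L → ∑ j, ∑ k, (W l j k) ^ 2 ≤ Wc) :
    ∀ l < L, ∑ s, ∑ k, absPrefixProd W (l + 1) s k ^ 2 ≤ Wc ^ (l + 1) := by
  have hWabs : ∀ l < L, ∑ j, ∑ k, (W l).map (fun x => |x|) j k ^ 2 ≤ Wc := by
    simpa only [Matrix.map_apply, sq_abs] using hW
  intro l hl
  induction l with
  | zero => simpa [absPrefixProd] using hWabs 0 hl
  | succ l ih =>
    have ih := ih (by omega)
    calc ∑ s, ∑ k, absPrefixProd W (l + 2) s k ^ 2
        ≤ (∑ s, ∑ k, absPrefixProd W (l + 1) s k ^ 2) *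
            ∑ j, ∑ k, (W (l + 1)).map (fun x => |x|) j k ^ 2 :=
          Matrix.sum_sq_mul_le _ _
      _ ≤ Wc ^ (l + 1) * Wc :=
          mul_le_mul ih (hWabs (l + 1) hl) (by positivity)
            ((Finset.sum_nonneg fun _ _ => by positivity).trans ih)
      _ = Wc ^ (l + 2) := by ring

variable {A : Matrix (Fin N) (Fin N) ℝ}

lemma abs_mul_mul_apply_le (hA : ∀ i j, 0 ≤ A i j) {l : ℕ}
    {D : Matrix (Fin N) (Fin (dims l)) ℝ} {E : Matrix (Fin N) (Fin (dims 0)) ℝ}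
    (hD : ∀ j m, |D j m| ≤ (A ^ l * E * absPrefixProd W l) j m)
    (j : Fin N) (m : Fin (dims (l + 1))) :
    |(A * D * W l) j m| ≤ (A ^ (l + 1) * E * absPrefixProd W (l + 1)) j m := by
  have hA' : ∀ i j, |A i j| ≤ A i j := fun i j => (abs_of_nonneg (hA i j)).le
  calc |(A * D * W l) j m|
      ≤ (A * (A ^ l * E * absPrefixProd W l) * (W l).map (fun x => |x|)) j m :=
        Matrix.abs_mul_apply_le (Matrix.abs_mul_apply_le hA' hD) (fun _ _ => le_rfl) j m
    _ = (A ^ (l + 1) * E * absPrefixProd W (l + 1)) j m := by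
        simp only [absPrefixProd, pow_succ', Matrix.mul_assoc]

lemma abs_sub_layer_le (hA : ∀ i j, 0 ≤ A i j)
    {H H' : (l : ℕ) → Matrix (Fin N) (Fin (dims l)) ℝ} {n : ℕ}
    (hH : ∀ l < n, H (l + 1) = (A * H l * W l).map relu)
    (hH' : ∀ l < n, H' (l + 1) = (A * H' l * W l).map relu) :
    ∀ l ≤ n, ∀ j m,
      |(H' l - H l) j m| ≤ (A ^ l * (H' 0 - H 0).map (fun x => |x|) * absPrefixProd W l) j m := by
  intro l hl
  induction l with
  | zero => simp [absPrefixProd]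
  | succ l ih =>
    intro j m
    rw [Matrix.sub_apply, hH l hl, hH' l hl]
    refine (abs_relu_sub_relu_le _ _).trans ?_
    rw [← Matrix.sub_apply, ← Matrix.sub_mul, ← Matrix.mul_sub]
    exact abs_mul_mul_apply_le W hA (ih (by omega)) j m

end GCN

theorem attack_influence_le_general
    (N L' T : ℕ)
    (L : ℕ) (hLdef : L = L' + 1)
    (dims : ℕ → ℕ)
    (Ahat : Matrix (Fin N) (Fin N) ℝ) (hA : ∀ i j, 0 ≤ Ahat i j)
    (W : (l : ℕ) → Matrix (Fin (dims l)) (Fin (dims (l + 1))) ℝ)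
    (Wc : ℝ)
    (hW : ∀ l, l < L → ∑ j, ∑ k, (W l j k) ^ 2 ≤ Wc)
    (M : ℝ) (hM : 0 ≤ M)
    (g : (Fin (dims (L' + 1)) → ℝ) → (Fin T → ℝ))
    (hg : ∀ u v, ∑ t, (g u t - g v t) ^ 2 ≤ M * ∑ j, (u j - v j) ^ 2)
    (X U : Matrix (Fin N) (Fin (dims 0)) ℝ)
    (H H' : (l : ℕ) → Matrix (Fin N) (Fin (dims l)) ℝ)
    (hH0 : H 0 = X) (hH'0 : H' 0 = X + U)
    (hHrec : ∀ l, l + 2 ≤ L → H (l + 1) = (Ahat * H l * W l).map relu)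
    (hH'rec : ∀ l, l + 2 ≤ L → H' (l + 1) = (Ahat * H' l * W l).map relu)
    (i : Fin N) :
    ∑ t, (g ((Ahat * H' L' * W L') i) t
            - g ((Ahat * H L' * W L') i) t) ^ 2
      ≤ M * Wc ^ L * ∑ k, ((Ahat ^ L * (U.map (fun x => |x|))) i k) ^ 2 := by
  subst hLdef
  set B := Ahat ^ (L' + 1) * U.map (fun x => |x|)
  have hU : H' 0 - H 0 = U := by rw [hH0, hH'0, add_sub_cancel_left]
  have hlayer := abs_sub_layer_le W hA (n := L') (fun l hl => hHrec l (by omega))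
    (fun l hl => hH'rec l (by omega)) L' le_rfl
  rw [hU] at hlayer
  have hpre : ∀ k, |(Ahat * H' L' * W L') i k - (Ahat * H L' * W L') i k|
      ≤ (B * absPrefixProd W (L' + 1)) i k := by
    intro k
    rw [← Matrix.sub_apply, ← Matrix.sub_mul, ← Matrix.mul_sub]
    exact abs_mul_mul_apply_le W hA hlayer i k
  calc _ ≤ M * ∑ k, ((Ahat * H' L' * W L') i k - (Ahat * H L' * W L') i k) ^ 2 := hg _ _
    _ ≤ M * ∑ k, (B * absPrefixProd W (L' + 1)) i k ^ 2 :=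
        mul_le_mul_of_nonneg_left (sum_sq_le_sum_sq_of_abs_le hpre) hM
    _ ≤ M * ((∑ s, B i s ^ 2) * Wc ^ (L' + 1)) := by
        refine mul_le_mul_of_nonneg_left ((Matrix.sum_sq_mul_apply_le _ _ i).trans ?_) hM
        exact mul_le_mul_of_nonneg_left (sum_sq_absPrefixProd_le W hW L' (by omega))
          (Finset.sum_nonneg fun _ _ => sq_nonneg _)
    _ = M * Wc ^ (L' + 1) * ∑ k, B i k ^ 2 := by ring

/-- Quantitative diffusion-attack bound (Proposition 1 of the paper).
For an `L`-layer GCN `f` (here `L = L' + 1 ≥ 1`) with nonnegative propagation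
matrix `Â`, weight matrices satisfying `‖W^(l)‖_F² ≤ Wc`, and an
`M`-Lipschitz-squared readout `g` (`‖g u − g v‖₂² ≤ M ‖u − v‖₂²`), the attack
influence `φᵢ(U) = ‖f(X+U)ᵢ − f(X)ᵢ‖₂²` satisfies
`φᵢ(U) ≤ M ⬝ Wc^L ⬝ ‖(Â^L |U|)ᵢ‖₂²`. -/
theorem attack_influence_le
    (N L' T : ℕ) (hN : 1 ≤ N)
    (L : ℕ) (hLdef : L = L' + 1)
    (dims : ℕ → ℕ) (S : ℕ) (hS : dims 0 = S) (hS1 : 1 ≤ S)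
    (Ahat : Matrix (Fin N) (Fin N) ℝ) (hA : ∀ i j, 0 ≤ Ahat i j)
    (W : (l : ℕ) → Matrix (Fin (dims l)) (Fin (dims (l + 1))) ℝ)
    (Wc : ℝ) (hWc : 0 ≤ Wc)
    (hW : ∀ l, l < L → ∑ j, ∑ k, (W l j k) ^ 2 ≤ Wc)
    (M : ℝ) (hM : 0 ≤ M)
    (g : (Fin (dims (L' + 1)) → ℝ) → (Fin T → ℝ))
    (hg : ∀ u v, ∑ t, (g u t - g v t) ^ 2 ≤ M * ∑ j, (u j - v j) ^ 2)
    (X U : Matrix (Fin N) (Fin (dims 0)) ℝ)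
    (H H' : (l : ℕ) → Matrix (Fin N) (Fin (dims l)) ℝ)
    (hH0 : H 0 = X) (hH'0 : H' 0 = X + U)
    (hHrec : ∀ l, l + 2 ≤ L → H (l + 1) = (Ahat * H l * W l).map relu)
    (hH'rec : ∀ l, l + 2 ≤ L → H' (l + 1) = (Ahat * H' l * W l).map relu)
    (i : Fin N) :
    ∑ t, (g ((Ahat * H' L' * W L') i) t
            - g ((Ahat * H L' * W L') i) t) ^ 2
      ≤ M * Wc ^ L * ∑ k, ((Ahat ^ L * (U.map (fun x => |x|))) i k) ^ 2 :=
  attack_influence_le_general N L' T L hLdef dims Ahat hA W Wc hW M hM g hg X U H H' hH0 hH'0 hHrec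
    hH'rec i
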